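/- arXiv:2301.09699 — 2 statements merged into one kernel-verified Lean document; each statement's English description precedes it below -/
import Mathlib

section
/- For every real number x ≥ 1, the series ∑_{n=1}^∞ (-1)^n · C(x,n) · ∑_{k=1}^n (-1)^k · (k!/k^k) · C(n,k) converges, and x^{x-1} times its sum equals Γ(x), where Γ is the real Gamma function. -/
/-- The generalized binomial coefficient `C(x, n) = x (x-1) ⋯ (x-n+1) / n!`. -/
noncomputable def genBinom (x : ℝ) (n : ℕ) : ℝ :=
  (∏ i ∈ Finset.range n, (x - i)) / (Nat.factorial n : ℝ)

open Real Filter Finset Set MeasureTheory Topology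
open scoped Nat

/-!
With `u = t e^{-t}` one has `k! / k^k = ∫₀^∞ k u^k dt`, so the binomial theorem turns the inner
sum into `-n ∫₀^∞ u (1 - u)^{n-1} dt`, and `n C(x, n) = x C(x - 1, n - 1)` turns the `n`-th term
into `∫₀^∞ x u C(x - 1, n - 1) (u - 1)^{n-1} dt`. Since `0 < u < 1`, the binomial series sums these
integrands to `x u^x`, and `∫₀^∞ x u^x dt = Γ(x + 1) / x^x = Γ(x) / x^{x-1}`. Summation and
integration may be exchanged by dominated convergence: for `m > x - 1` the terms
`C(x - 1, m) (u - 1)^m` have constant sign, so the partial sums of the binomial series lie between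
a fixed partial sum and the limit; they are therefore uniformly bounded, and the integrands are
dominated by a constant multiple of `u`.
-/

lemma sum_Icc_one_eq_sum_range {M : Type*} [AddCommMonoid M] (f : ℕ → M) (N : ℕ) :
    ∑ n ∈ Icc 1 N, f n = ∑ m ∈ range N, f (m + 1) := by
  rw [range_eq_Ico, sum_Ico_add' f 0 N 1]
  rfl

lemma sum_Icc_natCast_mul_choose_mul_pow {R : Type*} [CommRing R] (n : ℕ) (v : R) :
    ∑ k ∈ Icc 1 n, (k * n.choose k : R) * v ^ k = n * v * (1 + v) ^ (n - 1) := by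
  cases n with
  | zero => simp
  | succ m =>
    have hterm (k : ℕ) : ((k + 1 : ℕ) * (m + 1).choose (k + 1) : R) * v ^ (k + 1)
        = (m + 1) * v * (v ^ k * m.choose k) := by
      have h := congrArg (Nat.cast : ℕ → R) (Nat.add_one_mul_choose_eq m k)
      push_cast at h ⊢
      linear_combination v ^ (k + 1) * h.symm
    rw [sum_Icc_one_eq_sum_range, sum_congr rfl fun k _ ↦ hterm k, ← mul_sum, add_comm 1 v,
      add_pow]
    simp

lemma genBinom_eq_ringChoose (x : ℝ) (n : ℕ) : genBinom x n = Ring.choose x n := by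
  rw [Ring.choose_eq_smul, genBinom, ← descPochhammer_eval_eq_prod_range, smul_eq_mul,
    inv_mul_eq_div, ← descPochhammer_map (algebraMap ℤ ℝ), Polynomial.eval_map_algebraMap,
    Polynomial.aeval_eq_smeval]

lemma hasSum_genBinom_mul_pow (a : ℝ) {w : ℝ} (hw : |w| < 1) :
    HasSum (fun n ↦ genBinom a n * w ^ n) ((1 + w) ^ a) := by
  have hw' : w ∈ Metric.eball (0 : ℝ) 1 := by
    simpa [Metric.mem_eball, edist_zero_right, enorm_eq_nnnorm, ← NNReal.coe_lt_one] using hw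
  simpa [genBinom_eq_ringChoose, binomialSeries, mul_comm] using
    Real.one_add_rpow_hasFPowerSeriesOnBall_zero.hasSum hw'

lemma genBinom_succ (x : ℝ) (n : ℕ) :
    genBinom x (n + 1) = (x - n) / (n + 1) * genBinom x n := by
  rw [genBinom, genBinom, prod_range_succ, Nat.factorial_succ]
  push_cast
  field_simp

lemma succ_mul_genBinom_succ (x : ℝ) (n : ℕ) :
    (n + 1) * genBinom x (n + 1) = x * genBinom (x - 1) n := by
  rw [genBinom, genBinom, prod_range_succ', Nat.factorial_succ]
  push_cast
  field_simp
  simp only [sub_sub, add_comm (1 : ℝ)]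
  ring

/-- The factors `y - i` of `C(y, m)` are nonnegative for `i ≤ ⌊y⌋` and negative afterwards. -/
lemma neg_one_pow_mul_genBinom_nonneg {y : ℝ} (hy : 0 ≤ y) (k : ℕ) :
    0 ≤ (-1) ^ k * genBinom y (⌊y⌋₊ + 1 + k) := by
  induction k with
  | zero =>
    rw [pow_zero, one_mul, add_zero, genBinom]
    refine div_nonneg (prod_nonneg fun i hi ↦ ?_) (by positivity)
    have hi : i ≤ ⌊y⌋₊ := Nat.lt_succ_iff.mp (mem_range.mp hi)
    exact sub_nonneg.mpr ((Nat.cast_le.mpr hi).trans (Nat.floor_le hy))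
  | succ k ih =>
    rw [← add_assoc]
    set n := ⌊y⌋₊ + 1 + k
    have hyn : y < n := (Nat.lt_floor_add_one y).trans_le (by simp [n])
    rw [genBinom_succ, pow_succ]
    calc (0 : ℝ) ≤ ((-1) ^ k * genBinom y n) * ((n - y) / (n + 1)) :=
          mul_nonneg ih (div_nonneg (by linarith) (by positivity))
      _ = _ := by ring

/-- From `n₀` on, `ε` times the partial sums increases to `ε L`, so the partial sums stay between
the `n₀`-th one and `L`. -/
lemma abs_sum_range_le_of_tendsto_of_sign {a : ℕ → ℝ} {L ε : ℝ} {n₀ : ℕ} (hε : |ε| = 1)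
    (hL : Tendsto (fun N ↦ ∑ n ∈ range N, a n) atTop (𝓝 L))
    (ha : ∀ n, n₀ ≤ n → 0 ≤ ε * a n) (N : ℕ) :
    |∑ n ∈ range N, a n| ≤ ∑ n ∈ range n₀, |a n| + |L| := by
  have hmono {M : ℕ} (hM : n₀ ≤ M) {M' : ℕ} (hM' : M ≤ M') :
      ε * ∑ n ∈ range M, a n ≤ ε * ∑ n ∈ range M', a n := by
    induction M', hM' using Nat.le_induction with
    | base => rfl
    | succ M' hM' ih =>
      rw [sum_range_succ, mul_add]
      linarith [ha M' (hM.trans hM')]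
  have hhead {M : ℕ} (hM : M ≤ n₀) : |∑ n ∈ range M, a n| ≤ ∑ n ∈ range n₀, |a n| :=
    (abs_sum_le_sum_abs _ _).trans
      (sum_le_sum_of_subset_of_nonneg (range_mono hM) fun _ _ _ ↦ abs_nonneg _)
  rcases le_total N n₀ with hN | hN
  · linarith [hhead hN, abs_nonneg L]
  have hupper : ε * ∑ n ∈ range N, a n ≤ ε * L :=
    ge_of_tendsto (hL.const_mul ε) (eventually_atTop.mpr ⟨N, fun M hM ↦ hmono hN hM⟩)
  have hlower := hmono le_rfl hN
  rw [← one_mul |_|, ← hε, ← abs_mul, abs_le]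
  have h₀ : |ε * ∑ n ∈ range n₀, a n| ≤ ∑ n ∈ range n₀, |a n| := by
    rw [abs_mul, hε, one_mul]
    exact hhead le_rfl
  have hεL : ε * L ≤ |L| := by
    rw [← one_mul |L|, ← hε, ← abs_mul]
    exact le_abs_self _
  constructor <;> linarith [neg_abs_le (ε * ∑ n ∈ range n₀, a n), abs_nonneg L,
    abs_nonneg (ε * ∑ n ∈ range n₀, a n)]

lemma abs_sum_range_genBinom_mul_pow_le {y w : ℝ} (hy : 0 ≤ y) (hw₁ : -1 < w) (hw₀ : w ≤ 0)
    (N : ℕ) :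
    |∑ m ∈ range N, genBinom y m * w ^ m| ≤ ∑ m ∈ range (⌊y⌋₊ + 1), |genBinom y m| + 1 := by
  have hsum := hasSum_genBinom_mul_pow y (abs_lt.mpr ⟨hw₁, by linarith⟩)
  have hsign (m : ℕ) (hm : ⌊y⌋₊ + 1 ≤ m) : 0 ≤ (-1) ^ (⌊y⌋₊ + 1) * (genBinom y m * w ^ m) := by
    obtain ⟨k, rfl⟩ := Nat.exists_eq_add_of_le hm
    have h := mul_nonneg (neg_one_pow_mul_genBinom_nonneg hy k)
      (pow_nonneg (neg_nonneg.mpr hw₀) (⌊y⌋₊ + 1 + k))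
    refine h.trans_eq ?_
    rw [neg_pow w, pow_add (-1 : ℝ) (⌊y⌋₊ + 1) k]
    ring_nf
    rw [pow_mul', neg_one_sq, one_pow, mul_one]
  refine (abs_sum_range_le_of_tendsto_of_sign (by simp) hsum.tendsto_sum_nat hsign N).trans ?_
  have hw : |w| ≤ 1 := abs_le.mpr ⟨hw₁.le, by linarith⟩
  refine add_le_add (sum_le_sum fun m _ ↦ ?_) ?_
  · rw [abs_mul, abs_pow]
    exact mul_le_of_le_one_right (abs_nonneg _) (pow_le_one₀ (abs_nonneg w) hw)
  · rw [abs_of_nonneg (rpow_nonneg (by linarith) y)]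
    exact rpow_le_one (by linarith) (by linarith) hy

lemma mul_exp_neg_mem_Ioo {t : ℝ} (ht : 0 < t) : t * exp (-t) ∈ Set.Ioo 0 1 := by
  refine ⟨by positivity, ?_⟩
  calc t * exp (-t) < exp t * exp (-t) := by
        gcongr; linarith [add_one_le_exp t]
    _ = 1 := by rw [← exp_add, add_neg_cancel, exp_zero]

lemma integrableOn_mul_exp_neg_Ioi : IntegrableOn (fun t : ℝ ↦ t * exp (-t)) (Ioi 0) := by
  simpa using integrableOn_rpow_mul_exp_neg_rpow (s := 1) (p := 1) (by norm_num) one_pos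

lemma integrableOn_Ioi_of_abs_le_mul_exp_neg {f : ℝ → ℝ} (hf : Continuous f) (C : ℝ)
    (hC : ∀ t > 0, |f t| ≤ C * (t * exp (-t))) : IntegrableOn f (Ioi 0) :=
  (integrableOn_mul_exp_neg_Ioi.const_mul C).mono' hf.aestronglyMeasurable
    (ae_restrict_of_forall_mem measurableSet_Ioi hC)

lemma integral_mul_exp_neg_rpow {s : ℝ} (hs : 0 < s) :
    ∫ t in Ioi 0, (t * exp (-t)) ^ s = Gamma (s + 1) / s ^ (s + 1) := by
  have h : ∀ t ∈ Ioi (0 : ℝ), (t * exp (-t)) ^ s = t ^ (s + 1 - 1) * exp (-(s * t)) := by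
    intro t ht
    rw [mul_rpow (le_of_lt ht) (exp_pos _).le, ← exp_mul, add_sub_cancel_right]
    ring_nf
  rw [setIntegral_congr_fun measurableSet_Ioi h,
    integral_rpow_mul_exp_neg_mul_Ioi (by linarith) hs, div_rpow zero_le_one hs.le, one_rpow]
  ring

lemma factorial_div_pow_self_eq_integral {k : ℕ} (hk : 0 < k) :
    (k ! : ℝ) / k ^ k = ∫ t in Ioi 0, k * (t * exp (-t)) ^ k := by
  have hk' : (0 : ℝ) < k := Nat.cast_pos.mpr hk
  simp_rw [integral_const_mul, ← rpow_natCast (_ * _)]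
  rw [integral_mul_exp_neg_rpow hk', Gamma_nat_eq_factorial, ← Nat.cast_succ, rpow_natCast,
    pow_succ]
  field_simp

lemma sum_Icc_neg_one_pow_mul_factorial_div_pow_mul_choose (n : ℕ) :
    ∑ k ∈ Icc 1 n, (-1) ^ k * ((k ! : ℝ) / k ^ k) * n.choose k
      = -(n * ∫ t in Ioi 0, t * exp (-t) * (1 - t * exp (-t)) ^ (n - 1)) := by
  have hterm : ∀ k ∈ Finset.Icc 1 n, (-1) ^ k * ((k ! : ℝ) / k ^ k) * n.choose k
      = ∫ t in Ioi 0, (k * n.choose k : ℝ) * (-(t * exp (-t))) ^ k := by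
    intro k hk
    rw [factorial_div_pow_self_eq_integral (Finset.mem_Icc.mp hk).1, ← integral_const_mul,
      ← integral_mul_const]
    congr 1 with t
    rw [neg_pow]
    ring
  have hint : ∀ k ∈ Finset.Icc 1 n,
      IntegrableOn (fun t ↦ (k * n.choose k : ℝ) * (-(t * exp (-t))) ^ k) (Ioi 0) := by
    intro k hk
    refine integrableOn_Ioi_of_abs_le_mul_exp_neg (by fun_prop) (k * n.choose k) fun t ht ↦ ?_
    obtain ⟨hu₀, hu₁⟩ := mul_exp_neg_mem_Ioo ht
    rw [abs_mul, abs_pow, abs_neg, abs_of_pos hu₀, abs_of_nonneg (by positivity)]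
    gcongr
    exact pow_le_of_le_one hu₀.le hu₁.le (Nat.one_le_iff_ne_zero.mp (Finset.mem_Icc.mp hk).1)
  rw [sum_congr rfl hterm, ← integral_finsetSum _ hint, ← integral_const_mul, ← integral_neg]
  congr 1 with t
  rw [sum_Icc_natCast_mul_choose_mul_pow, ← sub_eq_add_neg]
  ring

lemma newton_term_eq_integral (x : ℝ) (m : ℕ) :
    (-1) ^ (m + 1) * genBinom x (m + 1) *
        ∑ k ∈ Icc 1 (m + 1), (-1) ^ k * ((k ! : ℝ) / k ^ k) * (m + 1).choose k
      = ∫ t in Ioi 0, x * (t * exp (-t)) * (genBinom (x - 1) m * (t * exp (-t) - 1) ^ m) := by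
  rw [sum_Icc_neg_one_pow_mul_factorial_div_pow_mul_choose, Nat.add_sub_cancel, mul_neg,
    ← integral_const_mul, ← integral_const_mul, ← integral_neg]
  congr 1 with t
  push_cast
  rw [← neg_sub 1 (t * exp (-t)), neg_pow (1 - t * exp (-t))]
  linear_combination (-1) ^ m * (t * exp (-t)) * (1 - t * exp (-t)) ^ m *
    succ_mul_genBinom_succ x m

lemma newton_partial_sum_eq_integral (x : ℝ) (N : ℕ) :
    ∑ n ∈ Icc 1 N, (-1) ^ n * genBinom x n *
        ∑ k ∈ Icc 1 n, (-1) ^ k * ((k ! : ℝ) / k ^ k) * n.choose k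
      = ∫ t in Ioi 0, x * (t * exp (-t)) *
          ∑ m ∈ range N, genBinom (x - 1) m * (t * exp (-t) - 1) ^ m := by
  rw [sum_Icc_one_eq_sum_range]
  simp_rw [newton_term_eq_integral, mul_sum]
  refine (integral_finsetSum _ fun m _ ↦ ?_).symm
  refine integrableOn_Ioi_of_abs_le_mul_exp_neg (by fun_prop) (|x| * |genBinom (x - 1) m|)
    fun t ht ↦ ?_
  obtain ⟨hu₀, hu₁⟩ := mul_exp_neg_mem_Ioo ht
  have hw : |t * exp (-t) - 1| ≤ 1 := abs_le.mpr ⟨by linarith, by linarith⟩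
  rw [abs_mul, abs_mul, abs_of_pos hu₀, abs_mul, abs_pow]
  calc |x| * (t * exp (-t)) * (|genBinom (x - 1) m| * |t * exp (-t) - 1| ^ m)
      ≤ |x| * (t * exp (-t)) * (|genBinom (x - 1) m| * 1) := by
        gcongr
        exact pow_le_one₀ (abs_nonneg _) hw
    _ = _ := by ring

lemma tendsto_newton_partial_sum_integral {x : ℝ} (hx : 1 ≤ x) :
    Tendsto (fun N ↦ ∫ t in Ioi 0, x * (t * exp (-t)) *
        ∑ m ∈ range N, genBinom (x - 1) m * (t * exp (-t) - 1) ^ m)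
      atTop (𝓝 (∫ t in Ioi 0, x * (t * exp (-t)) ^ x)) := by
  have hx₀ : 0 < x := by linarith
  set B := ∑ m ∈ range (⌊x - 1⌋₊ + 1), |genBinom (x - 1) m| + 1
  refine tendsto_integral_of_dominated_convergence (fun t ↦ x * B * (t * exp (-t)))
    (fun N ↦ Continuous.aestronglyMeasurable (by fun_prop)) ?_ (fun N ↦ ?_) ?_
  · exact integrableOn_mul_exp_neg_Ioi.const_mul _
  · refine ae_restrict_of_forall_mem measurableSet_Ioi fun t ht ↦ ?_
    obtain ⟨hu₀, hu₁⟩ := mul_exp_neg_mem_Ioo ht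
    rw [norm_mul, norm_mul, Real.norm_eq_abs, Real.norm_eq_abs, Real.norm_eq_abs,
      abs_of_pos hu₀, abs_of_pos hx₀]
    have := abs_sum_range_genBinom_mul_pow_le (by linarith : 0 ≤ x - 1) (by linarith)
      (by linarith) N (w := t * exp (-t) - 1)
    calc _ ≤ x * (t * exp (-t)) * B := by gcongr
      _ = _ := by ring
  · refine ae_restrict_of_forall_mem measurableSet_Ioi fun t ht ↦ ?_
    obtain ⟨hu₀, hu₁⟩ := mul_exp_neg_mem_Ioo ht
    have hsum := hasSum_genBinom_mul_pow (x - 1) (w := t * exp (-t) - 1)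
      (abs_lt.mpr ⟨by linarith, by linarith⟩)
    convert hsum.tendsto_sum_nat.const_mul (x * (t * exp (-t))) using 2
    rw [add_sub_cancel, mul_assoc, ← rpow_one_add' hu₀.le (by linarith), add_sub_cancel]

theorem gamma_newton_series (x : ℝ) (hx : 1 ≤ x) :
    ∃ S : ℝ,
      Filter.Tendsto
        (fun N => ∑ n ∈ Finset.Icc 1 N, (-1) ^ n * genBinom x n *
          ∑ k ∈ Finset.Icc 1 n,
            (-1) ^ k * ((Nat.factorial k : ℝ) / (k : ℝ) ^ k) * (Nat.choose n k : ℝ))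
        Filter.atTop (nhds S) ∧
      x ^ (x - 1) * S = Real.Gamma x := by
  have hx₀ : 0 < x := by linarith
  refine ⟨∫ t in Ioi 0, x * (t * exp (-t)) ^ x, ?_, ?_⟩
  · simpa only [newton_partial_sum_eq_integral] using tendsto_newton_partial_sum_integral hx
  · rw [integral_const_mul, integral_mul_exp_neg_rpow hx₀, Gamma_add_one hx₀.ne',
      rpow_add hx₀, rpow_sub_one hx₀.ne', rpow_one]
    field_simp
end

section
/- Define Λ(x) = exp(S(x)), where S(x) = ∑_{n=1}^∞ [(-1)^n / (2n-1)] · p_n(x) · ∑_{k=1}^n [(-1)^k · (2k-1) / ((n-k)! · (k+n-1)!)] · ln k and p_n(x) = x · ∏_{k=1}^{n-1} (x² - k²). Then for every positive integer N, Λ(N) = N!. -/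
/-- `p_n(x) = x · ∏_{k=1}^{n-1} (x² - k²)`. -/
noncomputable def lambdaP (n : ℕ) (x : ℝ) : ℝ :=
  x * ∏ k ∈ Finset.Icc 1 (n - 1), (x ^ 2 - (k : ℝ) ^ 2)

/-- The `n`-th term of the series `S(x)` defining the `Λ` function. -/
noncomputable def lambdaTerm (n : ℕ) (x : ℝ) : ℝ :=
  ((-1) ^ n / (2 * (n : ℝ) - 1)) * lambdaP n x *
    ∑ k ∈ Finset.Icc 1 n,
      ((-1) ^ k * (2 * (k : ℝ) - 1) /
          ((Nat.factorial (n - k) : ℝ) * (Nat.factorial (k + n - 1) : ℝ))) *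
        Real.log (k : ℝ)

/-- The sum `S(x) = ∑_{n=1}^∞` of the terms `lambdaTerm n x`. -/
noncomputable def lambdaS (x : ℝ) : ℝ := ∑' n : ℕ, lambdaTerm (n + 1) x

/-- The pseudogamma function `Λ(x) = exp(S(x))`. -/
noncomputable def lambdaFn (x : ℝ) : ℝ := Real.exp (lambdaS x)


/-!
At a natural number `N`, `p_n(N)` is the descending factorial `(N+n-1)!/(N-n)!`, which vanishes
for `n > N`, so `S(N)` is a finite double sum. After exchanging the sums, the coefficient of `ln k`
is, with `m = 2k-1` and `d = N-k`, the sum `∑_{j ≤ d} (-1)^j m/(m+2j) C(d,j) C(m+d+j,d)`, and this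
equals `1` for every `d`: passing from `d` to `d+1` changes it by `m/(d+1)` times a `(d+1)`-st
finite difference of the degree-`d` polynomial `j ↦ C(m+d+j,d)`, which vanishes. Hence
`S(N) = ∑_{k ≤ N} ln k = ln N!`.
-/

open Finset Nat

theorem fwdDiff_iter_choose_eq_zero {m M : ℕ} (h : m < M) :
    (fwdDiff 1)^[M] (fun x ↦ x.choose m : ℕ → ℤ) = 0 := by
  obtain ⟨c, rfl⟩ := Nat.exists_eq_add_of_lt h
  have hm : (fwdDiff 1)^[m] (fun x ↦ x.choose m : ℕ → ℤ) = fun _ ↦ 1 := by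
    simpa using fwdDiff_iter_choose 0 m
  rw [show m + c + 1 = (c + 1) + m by ring, Function.iterate_add_apply, hm,
    Function.iterate_succ_apply, fwdDiff_const]
  exact Function.iterate_fixed (fwdDiff_const 1 0) c

theorem neg_one_pow_eq_neg_one_pow_mul_neg_one_pow_sub {R : Type*} [Monoid R] [HasDistribNeg R]
    {j M : ℕ} (h : j ≤ M) : (-1 : R) ^ j = (-1) ^ M * (-1) ^ (M - j) := by
  obtain ⟨e, rfl⟩ := Nat.exists_eq_add_of_le h
  rw [Nat.add_sub_cancel_left, pow_add, mul_assoc, ← pow_add, (Even.add_self e).neg_one_pow,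
    mul_one]

theorem sum_range_neg_one_pow_mul_choose_mul_choose_eq_zero {m M : ℕ} (h : m < M) (y : ℕ) :
    ∑ j ∈ range (M + 1), (-1 : ℤ) ^ j * M.choose j * (y + j).choose m = 0 := by
  have hΔ := fwdDiff_iter_eq_sum_shift 1 (fun x ↦ x.choose m : ℕ → ℤ) M y
  simp only [fwdDiff_iter_choose_eq_zero h, Pi.zero_apply, smul_eq_mul, mul_one] at hΔ
  calc ∑ j ∈ range (M + 1), (-1 : ℤ) ^ j * M.choose j * (y + j).choose m
      = (-1) ^ M * ∑ j ∈ range (M + 1), (-1 : ℤ) ^ (M - j) * M.choose j * (y + j).choose m := by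
        rw [mul_sum]
        refine sum_congr rfl fun j hj ↦ ?_
        rw [neg_one_pow_eq_neg_one_pow_mul_neg_one_pow_sub (Nat.le_of_lt_succ (mem_range.1 hj))]
        ring
    _ = 0 := by rw [← hΔ, mul_zero]

theorem add_one_mul_choose_mul_choose (m d j : ℕ) (hj : j ≤ d + 1) :
    (d + 1) * ((d + 1).choose j * (m + (d + 1) + j).choose (d + 1)) =
      (d + 1) * (d.choose j * (m + d + j).choose d) +
        (m + 2 * j) * ((d + 1).choose j * (m + d + j).choose d) := by
  have h₁ := add_one_mul_choose_eq (m + d + j) d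
  have h₂ := choose_mul_succ_eq d j
  have h₃ : d + 1 - j + (m + 2 * j) = m + d + j + 1 := by omega
  rw [show m + (d + 1) + j = m + d + j + 1 by ring]
  calc (d + 1) * ((d + 1).choose j * (m + d + j + 1).choose (d + 1))
      = (d + 1).choose j * ((m + d + j + 1) * (m + d + j).choose d) := by rw [h₁]; ring
    _ = d.choose j * (d + 1) * (m + d + j).choose d
          + (m + 2 * j) * ((d + 1).choose j * (m + d + j).choose d) := by rw [← h₃, h₂]; ring
    _ = _ := by ring

theorem sum_range_neg_one_pow_mul_div_mul_choose_mul_choose_eq_one {m : ℕ} (hm : 0 < m) (d : ℕ) :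
    ∑ j ∈ range (d + 1),
      (-1 : ℝ) ^ j * m / (m + 2 * j) * d.choose j * (m + d + j).choose d = 1 := by
  induction d with
  | zero => simp [hm.ne']
  | succ d ih =>
    have hstep : ∀ j ∈ range (d + 2),
        (-1 : ℝ) ^ j * m / (m + 2 * j) * (d + 1).choose j * (m + (d + 1) + j).choose (d + 1) =
          (-1 : ℝ) ^ j * m / (m + 2 * j) * d.choose j * (m + d + j).choose d +
            m / (d + 1) *
              (((-1 : ℤ) ^ j * (d + 1).choose j * (m + d + j).choose d : ℤ) : ℝ) := by
      intro j hj
      have key := congrArg (Nat.cast : ℕ → ℝ)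
        (add_one_mul_choose_mul_choose m d j (Nat.le_of_lt_succ (mem_range.1 hj)))
      push_cast at key ⊢
      have hpos : (0 : ℝ) < m + 2 * j := by positivity
      field_simp
      linear_combination key
    have hvanish := sum_range_neg_one_pow_mul_choose_mul_choose_eq_zero (lt_add_one d) (m + d)
    rw [sum_congr rfl hstep, sum_add_distrib, ← mul_sum, ← Int.cast_sum, hvanish, sum_range_succ,
      ih]
    simp

theorem descFactorial_eq_choose_mul_choose_mul_factorial_mul_factorial (m d j : ℕ) (hj : j ≤ d) :
    (m + d + j).descFactorial (m + 2 * j) = d.choose j * (m + d + j).choose d * j ! * (m + j)! := by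
  have h₁ := factorial_mul_descFactorial (show m + 2 * j ≤ m + d + j by omega)
  have h₂ := choose_mul_factorial_mul_factorial hj
  have h₃ := choose_mul_factorial_mul_factorial (show d ≤ m + d + j by omega)
  rw [show m + d + j - (m + 2 * j) = d - j by omega] at h₁
  rw [show m + d + j - d = m + j by omega] at h₃
  refine Nat.eq_of_mul_eq_mul_left (factorial_pos (d - j)) ?_
  rw [h₁, ← h₃, ← h₂]
  ring

theorem lambdaP_add_one_eq_eval_descPochhammer (n : ℕ) (x : ℝ) :
    lambdaP (n + 1) x = (descPochhammer ℝ (2 * n + 1)).eval (x + n) := by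
  induction n with
  | zero => simp [lambdaP]
  | succ n ih =>
    have hstep : lambdaP (n + 1 + 1) x = lambdaP (n + 1) x * (x ^ 2 - ((n + 1 : ℕ) : ℝ) ^ 2) := by
      simp only [lambdaP, Nat.add_sub_cancel, prod_Icc_succ_top (Nat.le_add_left 1 n), mul_assoc]
    have hdesc : (descPochhammer ℝ (2 * n + 1 + 1 + 1)).eval (x + (n + 1 : ℕ)) =
        (x + (n + 1 : ℕ)) *
          ((descPochhammer ℝ (2 * n + 1)).eval (x + n) * (x + n - (2 * n + 1 : ℕ))) := by
      rw [descPochhammer_succ_left, Polynomial.eval_mul, Polynomial.eval_X, Polynomial.eval_comp,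
        Polynomial.eval_sub, Polynomial.eval_X, Polynomial.eval_one, descPochhammer_succ_eval]
      push_cast
      ring_nf
    rw [hstep, ih, show 2 * (n + 1) + 1 = 2 * n + 1 + 1 + 1 by ring, hdesc]
    push_cast
    ring

theorem lambdaP_add_one_natCast (N n : ℕ) :
    lambdaP (n + 1) N = (N + n).descFactorial (2 * n + 1) := by
  rw [lambdaP_add_one_eq_eval_descPochhammer, ← Nat.cast_add, descPochhammer_eval_eq_descFactorial]

theorem lambdaP_natCast_eq_zero {N n : ℕ} (h : N < n) : lambdaP n N = 0 := by
  obtain ⟨n, rfl⟩ := Nat.exists_eq_add_of_le' (Nat.one_le_of_lt h)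
  rw [lambdaP_add_one_natCast, Nat.cast_eq_zero, descFactorial_eq_zero_iff_lt]
  omega

noncomputable def lambdaCoeff (n k : ℕ) : ℝ :=
  (-1) ^ k * (2 * (k : ℝ) - 1) / ((n - k)! * (k + n - 1)! : ℝ)

theorem lambdaTerm_eq_sum (n : ℕ) (x : ℝ) :
    lambdaTerm n x = ∑ k ∈ Icc 1 n,
      (-1) ^ n / (2 * (n : ℝ) - 1) * lambdaP n x * lambdaCoeff n k * Real.log k := by
  simp only [lambdaTerm, lambdaCoeff, mul_sum, mul_assoc]

theorem lambdaS_natCast (N : ℕ) : lambdaS N = ∑ n ∈ Icc 1 N, lambdaTerm n N := by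
  have hvanish : ∀ n ∉ range N, lambdaTerm (n + 1) N = 0 := fun n hn ↦ by
    rw [lambdaTerm, lambdaP_natCast_eq_zero (by simpa using hn), mul_zero, zero_mul]
  rw [lambdaS, tsum_eq_sum hvanish, range_eq_Ico, sum_Ico_add' (fun n ↦ lambdaTerm n N), zero_add,
    Ico_add_one_right_eq_Icc]

theorem sum_Icc_mul_lambdaP_mul_lambdaCoeff_eq_one {k N : ℕ} (hk : 1 ≤ k) (hkN : k ≤ N) :
    ∑ n ∈ Icc k N, (-1) ^ n / (2 * (n : ℝ) - 1) * lambdaP n N * lambdaCoeff n k = 1 := by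
  obtain ⟨k, rfl⟩ := Nat.exists_eq_add_of_le' hk
  obtain ⟨d, rfl⟩ := Nat.exists_eq_add_of_le hkN
  rw [← Ico_add_one_right_eq_Icc, sum_Ico_eq_sum_range,
    show k + 1 + d + 1 - (k + 1) = d + 1 by omega]
  refine (sum_congr rfl fun j hj ↦ ?_).trans
    (sum_range_neg_one_pow_mul_div_mul_choose_mul_choose_eq_one (by omega : 0 < 2 * k + 1) d)
  have hjd : j ≤ d := Nat.le_of_lt_succ (mem_range.1 hj)
  rw [show k + 1 + j = k + j + 1 by ring, lambdaP_add_one_natCast,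
    show k + 1 + d + (k + j) = 2 * k + 1 + d + j by ring,
    show 2 * (k + j) + 1 = 2 * k + 1 + 2 * j by ring,
    descFactorial_eq_choose_mul_choose_mul_factorial_mul_factorial _ _ _ hjd, lambdaCoeff,
    show k + j + 1 - (k + 1) = j by omega, show k + 1 + (k + j + 1) - 1 = 2 * k + 1 + j by omega]
  have hsign : (-1 : ℝ) ^ (k + j + 1) * (-1) ^ (k + 1) = (-1) ^ j := by
    rw [show k + j + 1 = j + (k + 1) by ring, pow_add, mul_assoc, ← mul_pow, neg_one_mul, neg_neg,
      one_pow, mul_one]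
  have hpos : (0 : ℝ) < 2 * k + 1 + 2 * j := by positivity
  push_cast
  rw [show 2 * ((k : ℝ) + j + 1) - 1 = 2 * k + 1 + 2 * j by ring,
    show 2 * ((k : ℝ) + 1) - 1 = 2 * k + 1 by ring, ← hsign]
  field_simp

theorem sum_Icc_log_natCast_eq_log_factorial (N : ℕ) :
    ∑ k ∈ Icc 1 N, Real.log k = Real.log N ! := by
  rw [← Real.log_prod fun k hk ↦ Nat.cast_ne_zero.2 (by simp only [mem_Icc] at hk; omega),
    ← Nat.cast_prod, ← Ico_add_one_right_eq_Icc, prod_Ico_id_eq_factorial]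

theorem lambda_interpolates_factorial_general (N : ℕ) :
    lambdaFn (N : ℝ) = (Nat.factorial N : ℝ) := by
  have hS : lambdaS N = ∑ k ∈ Icc 1 N, Real.log k := by
    rw [lambdaS_natCast, sum_congr rfl fun n _ ↦ lambdaTerm_eq_sum n N,
      sum_comm' (t' := Icc 1 N) (s' := fun k ↦ Icc k N) (by intros; simp only [mem_Icc]; omega)]
    refine sum_congr rfl fun k hk ↦ ?_
    rw [mem_Icc] at hk
    rw [← sum_mul, sum_Icc_mul_lambdaP_mul_lambdaCoeff_eq_one hk.1 hk.2, one_mul]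
  rw [lambdaFn, hS, sum_Icc_log_natCast_eq_log_factorial, Real.exp_log (by positivity)]

theorem lambda_interpolates_factorial (N : ℕ) (hN : 1 ≤ N) :
    lambdaFn (N : ℝ) = (Nat.factorial N : ℝ) :=
  lambda_interpolates_factorial_general N
end
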